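/- For 0 < α < 1, θ > 0, b ≥ 0, n ≥ 1 and 1 ≤ K ≤ n with n − αK > 0, define ψ(v) = e^{-(θ/α)[(v+b)^α − v^α]} · (v/(v+b))^{n−αK+1} · (θ(v+b)^α + (n−αK))/(θ v^α + (n−αK)) for v > 0. Then 0 < ψ(v) ≤ 1 for all v > 0 when θ(v+b)^α + (n−αK) ≤ e^{(θ/α)[(v+b)^α − v^α]} ((v+b)/v)^{n−αK+1} (θ v^α + (n−αK)); in particular ψ(v) ≤ 1 holds for all v > 0. -/

import Mathlib

open Real

/-!
The exponential factor is at most `1` because `t ↦ t ^ α` is increasing. Since `v / (v + b) ≤ 1`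
and `α < 1 < n - αK + 1`, the power factor is at most `v ^ α / (v + b) ^ α`, and adding `n - αK`
to numerator and denominator of `θ (v + b) ^ α / (θ v ^ α)` only brings it closer to `1`, so the
last factor is at most `(v + b) ^ α / v ^ α`. These two bounds cancel.
-/

theorem add_div_add_le_div {p q c : ℝ} (hp : 0 < p) (hpq : p ≤ q) (hc : 0 ≤ c) :
    (q + c) / (p + c) ≤ q / p := by
  rw [div_le_div_iff₀ (by positivity) hp]
  nlinarith

theorem exp_neg_mul_rpow_sub_rpow_le_one {x y α t : ℝ} (hx : 0 ≤ x) (hxy : x ≤ y) (hα : 0 ≤ α)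
    (ht : 0 ≤ t) : exp (-t * (y ^ α - x ^ α)) ≤ 1 := by
  have : x ^ α ≤ y ^ α := rpow_le_rpow hx hxy hα
  rw [exp_le_one_iff]
  nlinarith

theorem exp_mul_div_rpow_mul_div_le_one {x y α s t θ c : ℝ} (hx : 0 < x) (hxy : x ≤ y)
    (hα : 0 ≤ α) (hαs : α ≤ s) (ht : 0 ≤ t) (hθ : 0 < θ) (hc : 0 ≤ c) :
    exp (-t * (y ^ α - x ^ α)) * (x / y) ^ s * ((θ * y ^ α + c) / (θ * x ^ α + c)) ≤ 1 := by
  have hy : 0 < y := hx.trans_le hxy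
  have hxα : 0 < x ^ α := rpow_pos_of_pos hx α
  have hyα : 0 < y ^ α := rpow_pos_of_pos hy α
  have hpow : (x / y) ^ s ≤ x ^ α / y ^ α := by
    rw [← div_rpow hx.le hy.le]
    exact rpow_le_rpow_of_exponent_ge (by positivity) ((div_le_one hy).mpr hxy) hαs
  have hratio : (θ * y ^ α + c) / (θ * x ^ α + c) ≤ y ^ α / x ^ α := by
    calc (θ * y ^ α + c) / (θ * x ^ α + c) ≤ θ * y ^ α / (θ * x ^ α) :=
          add_div_add_le_div (by positivity)
            (mul_le_mul_of_nonneg_left (rpow_le_rpow hx.le hxy hα) hθ.le) hc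
      _ = y ^ α / x ^ α := mul_div_mul_left _ _ hθ.ne'
  calc exp (-t * (y ^ α - x ^ α)) * (x / y) ^ s * ((θ * y ^ α + c) / (θ * x ^ α + c))
      ≤ 1 * (x ^ α / y ^ α) * (y ^ α / x ^ α) := by
        gcongr
        exact exp_neg_mul_rpow_sub_rpow_le_one hx.le hxy hα ht
    _ = 1 := by field_simp

theorem rejection_ratio_le_one_general (θ α b : ℝ) (n K : ℕ)
    (hα0 : 0 < α) (hα1 : α < 1) (hθ : 0 < θ) (hb : 0 ≤ b)
    (hnK : 0 < (n : ℝ) - α * K) :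
    ∀ v : ℝ, 0 < v →
      0 < Real.exp (-(θ / α) * ((v + b) ^ α - v ^ α)) *
            (v / (v + b)) ^ ((n : ℝ) - α * K + 1) *
            ((θ * (v + b) ^ α + ((n : ℝ) - α * K)) / (θ * v ^ α + ((n : ℝ) - α * K))) ∧
        Real.exp (-(θ / α) * ((v + b) ^ α - v ^ α)) *
            (v / (v + b)) ^ ((n : ℝ) - α * K + 1) *
            ((θ * (v + b) ^ α + ((n : ℝ) - α * K)) / (θ * v ^ α + ((n : ℝ) - α * K))) ≤ 1 := by
  intro v hv
  have hvb : 0 < v + b := by linarith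
  refine ⟨by positivity, ?_⟩
  exact exp_mul_div_rpow_mul_div_le_one hv (by linarith) hα0.le (by linarith)
    (div_pos hθ hα0).le hθ hnK.le

/-- The acceptance ratio of the rejection sampler for the augmented variable of the
normalized generalized gamma process satisfies `0 < ψ(v) ≤ 1` for all `v > 0`, where
`ψ(v) = e^{-(θ/α)[(v+b)^α - v^α]} (v/(v+b))^{n-αK+1}
        (θ(v+b)^α + (n-αK))/(θ v^α + (n-αK))`. -/
theorem rejection_ratio_le_one (θ α b : ℝ) (n K : ℕ)
    (hα0 : 0 < α) (hα1 : α < 1) (hθ : 0 < θ) (hb : 0 ≤ b)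
    (hn : 1 ≤ n) (hK1 : 1 ≤ K) (hKn : K ≤ n) (hnK : 0 < (n : ℝ) - α * K) :
    ∀ v : ℝ, 0 < v →
      0 < Real.exp (-(θ / α) * ((v + b) ^ α - v ^ α)) *
            (v / (v + b)) ^ ((n : ℝ) - α * K + 1) *
            ((θ * (v + b) ^ α + ((n : ℝ) - α * K)) / (θ * v ^ α + ((n : ℝ) - α * K))) ∧
        Real.exp (-(θ / α) * ((v + b) ^ α - v ^ α)) *
            (v / (v + b)) ^ ((n : ℝ) - α * K + 1) *
            ((θ * (v + b) ^ α + ((n : ℝ) - α * K)) / (θ * v ^ α + ((n : ℝ) - α * K))) ≤ 1 :=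
  rejection_ratio_le_one_general θ α b n K hα0 hα1 hθ hb hnK
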